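/- arXiv:2506.01178 — 5 statements merged into one kernel-verified Lean document; each statement's English description precedes it below -/
import Mathlib

section
/- Let d ∈ ℕ and Θ,γ ∈ ℝ^d with all entries strictly positive be such that ∑_{ℓ∈[d]} Θ_ℓ/γ_ℓ < 1. Then for every θ,ε ∈ ℝ^d with nonnegative entries such that θ_ℓ ≤ Θ_ℓ for every ℓ ∈ [d], and every z ∈ ℕ, one has ∑_{ℓ∈[d]} ⌊(θ_ℓ·z − ε_ℓ)/γ_ℓ⌋ ≤ z − 1. Furthermore, if the inequality is tight, then either (i) ε_ℓ = 0 and θ_ℓ = Θ_ℓ for every ℓ ∈ [d], or (ii) z < 1/(1 − ∑_{ℓ∈[d]} Θ_ℓ/γ_ℓ). -/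
/-!
Since `ε ≥ 0`, `θ ≤ Θ` and `γ > 0`, every summand `(θ ℓ z - ε ℓ) / γ ℓ` is at most `z · Θ ℓ / γ ℓ`,
so the real sum is at most `z ∑ Θ ℓ / γ ℓ < z`; the floors sum to an integer below it, hence to
at most `z - 1`. If some `ε ℓ > 0` or some `θ ℓ < Θ ℓ`, one summand is strictly smaller, and
tightness gives `z - 1 < z ∑ Θ ℓ / γ ℓ`, which rearranges to `z < 1 / (1 - ∑ Θ ℓ / γ ℓ)`.
-/

theorem Int.cast_sum_floor_le {ι : Type*} (s : Finset ι) (x : ι → ℝ) :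
    ((∑ i ∈ s, ⌊x i⌋ : ℤ) : ℝ) ≤ ∑ i ∈ s, x i := by
  push_cast
  exact Finset.sum_le_sum fun i _ => Int.floor_le (x i)

theorem Int.sum_floor_le_sub_one_of_sum_lt {ι : Type*} (s : Finset ι) (x : ι → ℝ) (n : ℤ)
    (h : ∑ i ∈ s, x i < n) : ∑ i ∈ s, ⌊x i⌋ ≤ n - 1 := by
  have : ∑ i ∈ s, ⌊x i⌋ < n := by exact_mod_cast (Int.cast_sum_floor_le s x).trans_lt h
  omega

section Summand

variable {θ Θ ε γ z : ℝ}

theorem sub_div_le_mul_div (hε : 0 ≤ ε) (hθ : θ ≤ Θ) (hγ : 0 < γ) (hz : 0 ≤ z) :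
    (θ * z - ε) / γ ≤ z * (Θ / γ) := by
  rw [mul_div_assoc']
  gcongr
  nlinarith

theorem sub_div_lt_mul_div (hε : 0 ≤ ε) (hθ : θ ≤ Θ) (hγ : 0 < γ) (hz : 0 < z)
    (hne : ¬(ε = 0 ∧ θ = Θ)) : (θ * z - ε) / γ < z * (Θ / γ) := by
  rw [mul_div_assoc']
  gcongr
  rcases hε.eq_or_lt with rfl | hε
  · nlinarith [lt_of_le_of_ne hθ fun h => hne ⟨rfl, h⟩]
  · nlinarith

end Summand

theorem lt_one_div_one_sub_of_sub_one_lt_mul {S z : ℝ} (hS : S < 1) (h : z - 1 < z * S) :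
    z < 1 / (1 - S) := by
  rw [lt_div_iff₀ (sub_pos.mpr hS)]
  linarith

theorem floor_sum_bound_general (d : ℕ) (Θ γ : Fin d → ℝ)
    (hγ : ∀ ℓ, 0 < γ ℓ)
    (hsum : ∑ ℓ, Θ ℓ / γ ℓ < 1)
    (θ ε : Fin d → ℝ) (hε0 : ∀ ℓ, 0 ≤ ε ℓ)
    (hθΘ : ∀ ℓ, θ ℓ ≤ Θ ℓ) (z : ℕ) (hz : 0 < z) :
    (∑ ℓ, ⌊(θ ℓ * (z : ℝ) - ε ℓ) / γ ℓ⌋ ≤ (z : ℤ) - 1) ∧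
    (∑ ℓ, ⌊(θ ℓ * (z : ℝ) - ε ℓ) / γ ℓ⌋ = (z : ℤ) - 1 →
      (∀ ℓ, ε ℓ = 0 ∧ θ ℓ = Θ ℓ) ∨ (z : ℝ) < 1 / (1 - ∑ ℓ, Θ ℓ / γ ℓ)) := by
  have hzR : (0 : ℝ) < z := by exact_mod_cast hz
  have hle : ∑ ℓ, (θ ℓ * (z : ℝ) - ε ℓ) / γ ℓ ≤ z * ∑ ℓ, Θ ℓ / γ ℓ := by
    rw [Finset.mul_sum]
    exact Finset.sum_le_sum fun ℓ _ => sub_div_le_mul_div (hε0 ℓ) (hθΘ ℓ) (hγ ℓ) hzR.le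
  have hlt : ∑ ℓ, (θ ℓ * (z : ℝ) - ε ℓ) / γ ℓ < (z : ℤ) := by
    push_cast
    nlinarith
  refine ⟨Int.sum_floor_le_sub_one_of_sum_lt _ _ _ hlt, fun htight => ?_⟩
  by_cases hall : ∀ ℓ, ε ℓ = 0 ∧ θ ℓ = Θ ℓ
  · exact Or.inl hall
  right
  obtain ⟨ℓ₀, hℓ₀⟩ := not_forall.mp hall
  have hstrict : ∑ ℓ, (θ ℓ * (z : ℝ) - ε ℓ) / γ ℓ < z * ∑ ℓ, Θ ℓ / γ ℓ := by
    rw [Finset.mul_sum]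
    exact Finset.sum_lt_sum (fun ℓ _ => sub_div_le_mul_div (hε0 ℓ) (hθΘ ℓ) (hγ ℓ) hzR.le)
      ⟨ℓ₀, Finset.mem_univ _, sub_div_lt_mul_div (hε0 ℓ₀) (hθΘ ℓ₀) (hγ ℓ₀) hzR hℓ₀⟩
  have hfloor := Int.cast_sum_floor_le Finset.univ fun ℓ => (θ ℓ * (z : ℝ) - ε ℓ) / γ ℓ
  rw [htight] at hfloor
  push_cast at hfloor
  exact lt_one_div_one_sub_of_sub_one_lt_mul hsum (hfloor.trans_lt hstrict)

/-- **Lemma.** Let `d ∈ ℕ` and `Θ, γ ∈ ℝ^d` with strictly positive entries be such that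
`∑ ℓ, Θ ℓ / γ ℓ < 1`.  Then for all `θ, ε ∈ ℝ^d` with nonnegative entries, `θ ℓ ≤ Θ ℓ`
for every `ℓ`, and every positive integer `z`, we have
`∑ ℓ, ⌊(θ ℓ * z - ε ℓ) / γ ℓ⌋ ≤ z - 1`; moreover if the inequality is tight then
either `ε ℓ = 0` and `θ ℓ = Θ ℓ` for every `ℓ`, or `z < 1 / (1 - ∑ ℓ, Θ ℓ / γ ℓ)`. -/
theorem floor_sum_bound (d : ℕ) (hd : 0 < d) (Θ γ : Fin d → ℝ)
    (hΘ : ∀ ℓ, 0 < Θ ℓ) (hγ : ∀ ℓ, 0 < γ ℓ)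
    (hsum : ∑ ℓ, Θ ℓ / γ ℓ < 1)
    (θ ε : Fin d → ℝ) (hθ0 : ∀ ℓ, 0 ≤ θ ℓ) (hε0 : ∀ ℓ, 0 ≤ ε ℓ)
    (hθΘ : ∀ ℓ, θ ℓ ≤ Θ ℓ) (z : ℕ) (hz : 0 < z) :
    (∑ ℓ, ⌊(θ ℓ * (z : ℝ) - ε ℓ) / γ ℓ⌋ ≤ (z : ℤ) - 1) ∧
    (∑ ℓ, ⌊(θ ℓ * (z : ℝ) - ε ℓ) / γ ℓ⌋ = (z : ℤ) - 1 →
      (∀ ℓ, ε ℓ = 0 ∧ θ ℓ = Θ ℓ) ∨ (z : ℝ) < 1 / (1 - ∑ ℓ, Θ ℓ / γ ℓ)) :=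
  floor_sum_bound_general d Θ γ hγ hsum θ ε hε0 hθΘ z hz
end

section
/- Let I=(A,A',R,G,ω,c) be an instance of MCRA with d dimensions, let 𝓕 ⊆ 𝓔 be a finite set, let ψ ∈ {0,1}, and let α ∈ ℕ₀^d and δ,Δ ∈ ℕ₀ be such that 𝟙_{ψ=1}/2 + ∑_{ℓ∈[d]} 1/(α_ℓ+1) + ω*/(δ+1) ≤ 1 and either (Δ ≥ 2 and ψ = 1) or (the previous inequality holds strictly and Δ ≥ 1/(1 − (𝟙_{ψ=1}/2 + ∑_{ℓ∈[d]} 1/(α_ℓ+1) + ω*/(δ+1))) − 1). Let Ã ⊆ {a ∈ A(𝓕) : |𝓕(a)| ≥ 2}, with Ã = ∅ if ψ = 0; let G̃_ℓ = {i ∈ [k_ℓ] : |𝓕(ℓ,i)| ≥ α_ℓ+1} for each ℓ ∈ [d]; let R̃ = {r ∈ R : ∑_{(a,q)∈𝓕(r)} q(r) ≥ δ+1}; and let χ = 1 if |A(𝓕)∖Ã| ≥ Δ+1 and χ = 0 otherwise. Then |Ã| + ∑_{ℓ∈[d]} |G̃_ℓ| + |R̃| + χ ≤ |𝓕|. Furthermore,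 if the inequality is tight, then: (i) if ψ = 1 then Ã = A(𝓕); (ii) for every ℓ ∈ [d], G̃_ℓ = G_ℓ(𝓕) and every a ∈ A(𝓕) belongs to G_{ℓ,i} for some i ∈ G_ℓ(𝓕); and (iii) R̃ = R(𝓕) and ∑_{r∈R(𝓕)} q(r) = ω* for every (a,q) ∈ 𝓕. -/
open scoped Classical BigOperators

noncomputable section

/-- An instance of the multidimensional capacitated resource allocation problem (MCRA)
with `d` dimensions. -/
structure MCRA (d : ℕ) where
  A : Type
  R : Type
  [fintypeA : Fintype A]
  [fintypeR : Fintype R]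
  [decEqA : DecidableEq A]
  [decEqR : DecidableEq R]
  /-- The binding agents `A' ⊆ A`. -/
  bind : Finset A
  /-- Number of groups in each dimension. -/
  k : Fin d → ℕ
  /-- The groups in each dimension. -/
  G : (ℓ : Fin d) → Fin (k ℓ) → Finset A
  G_disjoint : ∀ ℓ i j, i ≠ j → Disjoint (G ℓ i) (G ℓ j)
  /-- The demand of each agent. -/
  dem : A → ℕ
  dem_pos : ∀ a, 0 < dem a
  /-- The capacity of each resource. -/
  cap : R → ℕ
  cap_pos : ∀ r, 0 < cap r

attribute [instance] MCRA.fintypeA MCRA.fintypeR MCRA.decEqA MCRA.decEqR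

namespace MCRA

variable {d : ℕ} (I : MCRA d)

/-- The set `𝒯_a` of `ω_a`-bundles of agent `a`. -/
def bundles (a : I.A) : Finset (I.R → ℕ) :=
  (Fintype.piFinset fun _ : I.R => Finset.range (I.dem a + 1)).filter
    fun q => ∑ r, q r = I.dem a

/-- `ω* = max_{a ∈ A} ω_a`. -/
def demMax : ℕ := Finset.univ.sup I.dem

/-- `𝓕(a)`: the hyperedges of `𝓕` incident to agent `a`. -/
def Fagent (F : Finset (I.A × (I.R → ℕ))) (a : I.A) : Finset (I.A × (I.R → ℕ)) :=
  F.filter fun e => e.1 = a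

/-- `𝓕(ℓ,i)`: the hyperedges of `𝓕` incident to group `G_{ℓ,i}`. -/
def Fgroup (F : Finset (I.A × (I.R → ℕ))) (ℓ : Fin d) (i : Fin (I.k ℓ)) :
    Finset (I.A × (I.R → ℕ)) :=
  F.filter fun e => e.1 ∈ I.G ℓ i

/-- `𝓕(r)`: the hyperedges of `𝓕` incident to resource `r`. -/
def Fres (F : Finset (I.A × (I.R → ℕ))) (r : I.R) : Finset (I.A × (I.R → ℕ)) :=
  F.filter fun e => 1 ≤ e.2 r

/-- `A(𝓕)`: the agents with at least one incident hyperedge. -/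
def Aof (F : Finset (I.A × (I.R → ℕ))) : Finset I.A := F.image Prod.fst

/-- `G_ℓ(𝓕)`: the groups of dimension `ℓ` with at least one incident hyperedge. -/
def Gof (F : Finset (I.A × (I.R → ℕ))) (ℓ : Fin d) : Finset (Fin (I.k ℓ)) :=
  Finset.univ.filter fun i => (I.Fgroup F ℓ i).Nonempty

/-- `R(𝓕)`: the resources with at least one incident hyperedge. -/
def Rof (F : Finset (I.A × (I.R → ℕ))) : Finset I.R :=
  Finset.univ.filter fun r => (I.Fres F r).Nonempty

end MCRA

/-!
A charging argument. Each hyperedge `(a, q) ∈ 𝓕` hands out charge `1/2` to its agent (when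
`ψ = 1`), `1/(α_ℓ + 1)` to its group in every dimension `ℓ`, and `q(r)/(δ + 1)` to every
resource `r`, so it spends at most `σ = 𝟙_{ψ=1}/2 + ∑_ℓ 1/(α_ℓ + 1) + ω*/(δ + 1) ≤ 1`. Agents
of `Ã` have at least two hyperedges, groups of `G̃_ℓ` at least `α_ℓ + 1`, and resources of `R̃`
a load of at least `δ + 1`, so each of them collects charge at least `1`. The charge that is not
collected pays for `χ`: if `ψ = 1` and `Δ ≥ 2`, at least three hyperedges belong to agents
outside `Ã` and waste `1/2` each; otherwise `σ < 1` and the at least `Δ + 1 ≥ 1/(1 - σ)`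
hyperedges leave `1 - σ` each. When the bound is tight no charge is wasted, and this is exactly
(i)–(iii).
-/
theorem add_sub_div_le_div {y M n a : ℝ} (ha : 0 < a) (hy : y * a ≤ M) :
    y + (n - M) / a ≤ n / a := by
  have := (le_div_iff₀ ha).2 hy
  rw [sub_div]
  linarith

section Charging

variable {ι : Type*} (s : Finset ι) (α : ι → ℕ) {δ ω n x z N P : ℕ} {y M : ι → ℕ} {t σ : ℝ}

theorem add_ite_mul_le_ite_mul {ψ : ℕ} (hψ : ψ ≠ 1 → x = 0) (h : 2 * x + N ≤ n) :
    (x : ℝ) + (if ψ = 1 then 1 / 2 else 0) * N ≤ (if ψ = 1 then 1 / 2 else 0) * n := by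
  split_ifs with h1
  · have : (2 * x + N : ℝ) ≤ n := by exact_mod_cast h
    linarith
  · simp [hψ h1]

theorem one_lt_ite_mul_or_one_le_mul_one_sub {ψ Δ : ℕ}
    (hΔ : (2 ≤ Δ ∧ ψ = 1) ∨ (σ < 1 ∧ 1 / (1 - σ) - 1 ≤ Δ)) (hN : Δ + 1 ≤ N) (hNn : N ≤ n) :
    1 < (if ψ = 1 then (1 : ℝ) / 2 else 0) * N ∨ 1 ≤ n * (1 - σ) := by
  rcases hΔ with ⟨hΔ2, rfl⟩ | ⟨hσ, hΔσ⟩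
  · left
    have : (3 : ℝ) ≤ N := by exact_mod_cast (by omega : 3 ≤ N)
    simp only [if_true]
    linarith
  · right
    have hσ' : 0 < 1 - σ := by linarith
    have hn : (Δ + 1 : ℝ) ≤ n := by exact_mod_cast hN.trans hNn
    have : 1 ≤ (Δ + 1) * (1 - σ) := by
      rw [div_sub_one hσ'.ne', div_le_iff₀ hσ'] at hΔσ
      linarith
    nlinarith

theorem add_ite_le_of_add_le_mul {X : ℕ} {S : ℝ} (c : Prop) [Decidable c] (hS : 0 ≤ S)
    (hσ : σ ≤ 1) (hXS : X + S ≤ n * σ) (hc : c → 1 < S ∨ 1 ≤ n * (1 - σ)) :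
    X + (if c then 1 else 0) ≤ n ∧ (X + (if c then 1 else 0) = n → S = 0) := by
  have hnσ : n * σ ≤ n := mul_le_of_le_one_right n.cast_nonneg hσ
  split_ifs with h
  · refine ⟨?_, fun heq => ?_⟩
    · exact_mod_cast (show (X + 1 : ℝ) ≤ n by rcases hc h with _ | _ <;> linarith)
    · have : (X + 1 : ℝ) = n := by exact_mod_cast heq
      rcases hc h with _ | _ <;> linarith
  · refine ⟨by exact_mod_cast (by linarith : (X : ℝ) ≤ n), fun heq => ?_⟩
    have : (X : ℝ) = n := by exact_mod_cast heq
    linarith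

/- In the application `x`, `y ℓ`, `z` are `|Ã|`, `|G̃_ℓ|`, `|R̃|`, while `N`, `M ℓ`, `P` are the
number of hyperedges of agents outside `Ã`, the number of hyperedges in groups of `G̃_ℓ`, and the
load of `𝓕` on `R̃`. -/
theorem charging_bound (c : Prop) [Decidable c] (ht : 0 ≤ t)
    (hσ : t + ∑ ℓ ∈ s, 1 / ((α ℓ : ℝ) + 1) + ω / ((δ : ℝ) + 1) ≤ σ) (hσ1 : σ ≤ 1)
    (hx : x + t * N ≤ t * n) (hy : ∀ ℓ ∈ s, y ℓ * (α ℓ + 1) ≤ M ℓ) (hM : ∀ ℓ ∈ s, M ℓ ≤ n)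
    (hz : z * (δ + 1) ≤ P) (hP : P ≤ n * ω) (hc : c → 1 < t * N ∨ 1 ≤ n * (1 - σ)) :
    x + ∑ ℓ ∈ s, y ℓ + z + (if c then 1 else 0) ≤ n ∧
      (x + ∑ ℓ ∈ s, y ℓ + z + (if c then 1 else 0) = n →
        t * N = 0 ∧ (∀ ℓ ∈ s, M ℓ = n) ∧ P = n * ω) := by
  have hN : 0 ≤ t * N := by positivity
  have hMslack : ∀ ℓ ∈ s, 0 ≤ ((n : ℝ) - M ℓ) / (α ℓ + 1) := fun ℓ hℓ =>
    div_nonneg (sub_nonneg.2 (by exact_mod_cast hM ℓ hℓ)) (by positivity)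
  have hPslack : 0 ≤ ((n : ℝ) * ω - P) / (δ + 1) :=
    div_nonneg (sub_nonneg.2 (by exact_mod_cast hP)) (by positivity)
  have hMsum := Finset.sum_nonneg hMslack
  have hXS : ((x + ∑ ℓ ∈ s, y ℓ + z : ℕ) : ℝ) +
      (t * N + ∑ ℓ ∈ s, ((n : ℝ) - M ℓ) / (α ℓ + 1) + ((n : ℝ) * ω - P) / (δ + 1)) ≤ n * σ := by
    have hy' : ∀ ℓ ∈ s, (y ℓ : ℝ) + ((n : ℝ) - M ℓ) / (α ℓ + 1) ≤ n / (α ℓ + 1) := fun ℓ hℓ =>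
      add_sub_div_le_div (by positivity) (by exact_mod_cast hy ℓ hℓ)
    have hz' : (z : ℝ) + ((n : ℝ) * ω - P) / (δ + 1) ≤ n * ω / (δ + 1) :=
      add_sub_div_le_div (by positivity) (by exact_mod_cast hz)
    have hys := Finset.sum_le_sum hy'
    rw [Finset.sum_add_distrib] at hys
    calc _ ≤ n * (t + ∑ ℓ ∈ s, 1 / ((α ℓ : ℝ) + 1) + ω / ((δ : ℝ) + 1)) := by
          simp only [Nat.cast_add, Nat.cast_sum, mul_add, Finset.mul_sum, mul_div_assoc',
            mul_one]
          linarith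
      _ ≤ n * σ := by gcongr
  obtain ⟨hle, htight⟩ := add_ite_le_of_add_le_mul c (by positivity) hσ1 hXS
    fun h => (hc h).imp_left fun h1 => by linarith
  refine ⟨hle, fun heq => ?_⟩
  obtain ⟨hNM0, hP0⟩ := (add_eq_zero_iff_of_nonneg (by positivity) hPslack).1 (htight heq)
  obtain ⟨hN0, hM0⟩ := (add_eq_zero_iff_of_nonneg hN hMsum).1 hNM0
  rw [Finset.sum_eq_zero_iff_of_nonneg hMslack] at hM0
  refine ⟨hN0, fun ℓ hℓ => ?_, ?_⟩
  · have := (div_eq_zero_iff.1 (hM0 ℓ hℓ)).resolve_right (by positivity)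
    exact_mod_cast (sub_eq_zero.1 this).symm
  · have := (div_eq_zero_iff.1 hP0).resolve_right (by positivity)
    exact_mod_cast (sub_eq_zero.1 this).symm

end Charging

theorem Finset.card_mul_le_card_biUnion {ι β : Type*} [DecidableEq β] {s : Finset ι}
    {t : ι → Finset β} {m : ℕ} (ht : (s : Set ι).PairwiseDisjoint t)
    (hm : ∀ i ∈ s, m ≤ (t i).card) : s.card * m ≤ (s.biUnion t).card := by
  rw [Finset.card_biUnion ht]
  simpa using Finset.card_nsmul_le_sum s _ m hm

namespace MCRA

open Finset

variable {d : ℕ} (I : MCRA d) (F : Finset (I.A × (I.R → ℕ)))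

theorem sum_eq_dem_of_mem_bundles {a : I.A} {q : I.R → ℕ} (hq : q ∈ I.bundles a) :
    ∑ r, q r = I.dem a :=
  (mem_filter.1 hq).2

theorem dem_le_demMax (a : I.A) : I.dem a ≤ I.demMax :=
  le_sup (mem_univ a)

theorem pairwiseDisjoint_Fagent (s : Finset I.A) :
    (s : Set I.A).PairwiseDisjoint (I.Fagent F) :=
  fun _ _ _ _ hab => disjoint_left.2 fun _ ha hb =>
    hab ((mem_filter.1 ha).2.symm.trans (mem_filter.1 hb).2)

theorem biUnion_Fagent (s : Finset I.A) : s.biUnion (I.Fagent F) = F.filter (·.1 ∈ s) := by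
  ext e
  simp [Fagent, and_comm]

theorem pairwiseDisjoint_Fgroup (ℓ : Fin d) (s : Finset (Fin (I.k ℓ))) :
    (s : Set (Fin (I.k ℓ))).PairwiseDisjoint (I.Fgroup F ℓ) :=
  fun i _ j _ hij => disjoint_left.2 fun _ hi hj =>
    disjoint_left.1 (I.G_disjoint ℓ i j hij) (mem_filter.1 hi).2 (mem_filter.1 hj).2

theorem biUnion_Fgroup (ℓ : Fin d) (s : Finset (Fin (I.k ℓ))) :
    s.biUnion (I.Fgroup F ℓ) = F.filter fun e => ∃ i ∈ s, e.1 ∈ I.G ℓ i := by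
  ext e
  simp only [mem_biUnion, Fgroup, mem_filter]
  tauto

theorem sum_Fres (r : I.R) : ∑ e ∈ I.Fres F r, e.2 r = ∑ e ∈ F, e.2 r :=
  sum_filter_of_ne fun _ _ h => Nat.one_le_iff_ne_zero.2 h

theorem card_Aof_sdiff_le (s : Finset I.A) :
    (I.Aof F \ s).card ≤ (F.filter fun e => e.1 ∉ s).card := by
  rw [Aof, sdiff_eq_filter, filter_image]
  exact card_image_le

theorem two_mul_card_add_card_filter_notMem_le {s : Finset I.A}
    (hs : ∀ a ∈ s, 2 ≤ (I.Fagent F a).card) :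
    2 * s.card + (F.filter fun e => e.1 ∉ s).card ≤ F.card := by
  have h := card_mul_le_card_biUnion (I.pairwiseDisjoint_Fagent F s) hs
  rw [biUnion_Fagent] at h
  have := card_filter_add_card_filter_not (s := F) (·.1 ∈ s)
  omega

theorem card_mul_le_card_filter_exists_mem_G {ℓ : Fin d} {s : Finset (Fin (I.k ℓ))} {m : ℕ}
    (hs : ∀ i ∈ s, m ≤ (I.Fgroup F ℓ i).card) :
    s.card * m ≤ (F.filter fun e => ∃ i ∈ s, e.1 ∈ I.G ℓ i).card :=
  I.biUnion_Fgroup F ℓ s ▸ card_mul_le_card_biUnion (I.pairwiseDisjoint_Fgroup F ℓ s) hs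

theorem card_mul_le_sum_sum {s : Finset I.R} {m : ℕ}
    (hs : ∀ r ∈ s, m ≤ ∑ e ∈ I.Fres F r, e.2 r) : s.card * m ≤ ∑ e ∈ F, ∑ r ∈ s, e.2 r := by
  rw [sum_comm]
  simpa [sum_Fres] using card_nsmul_le_sum s _ m hs

theorem sum_le_demMax (hF : ∀ e ∈ F, e.2 ∈ I.bundles e.1) (s : Finset I.R)
    {e : I.A × (I.R → ℕ)} (he : e ∈ F) : ∑ r ∈ s, e.2 r ≤ I.demMax :=
  calc ∑ r ∈ s, e.2 r ≤ ∑ r, e.2 r := sum_le_sum_of_subset (subset_univ s)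
    _ = I.dem e.1 := I.sum_eq_dem_of_mem_bundles (hF e he)
    _ ≤ I.demMax := I.dem_le_demMax e.1

theorem sum_sum_le_card_mul_demMax (hF : ∀ e ∈ F, e.2 ∈ I.bundles e.1) (s : Finset I.R) :
    ∑ e ∈ F, ∑ r ∈ s, e.2 r ≤ F.card * I.demMax := by
  simpa using sum_le_card_nsmul F _ _ fun e he => I.sum_le_demMax F hF s he

theorem eq_Aof_of_card_filter_notMem_eq_zero {s : Finset I.A} (hs : s ⊆ I.Aof F)
    (h : (F.filter fun e => e.1 ∉ s).card = 0) : s = I.Aof F := by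
  rw [card_eq_zero, filter_eq_empty_iff] at h
  refine hs.antisymm fun a ha => ?_
  obtain ⟨e, he, rfl⟩ := mem_image.1 ha
  exact not_not.1 (h he)

theorem filter_lt_card_Fgroup_subset_Gof (ℓ : Fin d) (m : ℕ) :
    (univ.filter fun i => m + 1 ≤ (I.Fgroup F ℓ i).card) ⊆ I.Gof F ℓ := fun i hi =>
  have := (mem_filter.1 hi).2
  mem_filter.2 ⟨mem_univ i, card_pos.1 (by omega)⟩

theorem eq_Gof_of_card_filter_exists_mem_G_eq {ℓ : Fin d} {s : Finset (Fin (I.k ℓ))}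
    (hs : s ⊆ I.Gof F ℓ) (h : (F.filter fun e => ∃ i ∈ s, e.1 ∈ I.G ℓ i).card = F.card) :
    s = I.Gof F ℓ ∧ ∀ a ∈ I.Aof F, ∃ i ∈ I.Gof F ℓ, a ∈ I.G ℓ i := by
  rw [card_filter_eq_iff] at h
  have hGof : s = I.Gof F ℓ := by
    refine hs.antisymm fun i hi => ?_
    obtain ⟨e, he⟩ := (mem_filter.1 hi).2
    obtain ⟨he, hei⟩ := mem_filter.1 he
    obtain ⟨j, hj, hej⟩ := h e he
    obtain rfl : i = j := by
      by_contra hij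
      exact disjoint_left.1 (I.G_disjoint ℓ i j hij) hei hej
    exact hj
  refine ⟨hGof, fun a ha => ?_⟩
  obtain ⟨e, he, rfl⟩ := mem_image.1 ha
  exact hGof ▸ h e he

theorem filter_lt_sum_Fres_subset_Rof (m : ℕ) :
    (univ.filter fun r => m + 1 ≤ ∑ e ∈ I.Fres F r, e.2 r) ⊆ I.Rof F := fun r hr =>
  have := (mem_filter.1 hr).2
  mem_filter.2 ⟨mem_univ r, nonempty_of_sum_ne_zero (f := (·.2 r)) (by omega)⟩

theorem eq_Rof_of_sum_sum_eq (hF : ∀ e ∈ F, e.2 ∈ I.bundles e.1) {s : Finset I.R}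
    (hs : s ⊆ I.Rof F) (h : ∑ e ∈ F, ∑ r ∈ s, e.2 r = F.card * I.demMax) :
    s = I.Rof F ∧ ∀ e ∈ F, ∑ r ∈ I.Rof F, e.2 r = I.demMax := by
  rw [← smul_eq_mul, ← sum_const, sum_eq_sum_iff_of_le fun e he => I.sum_le_demMax F hF s he]
    at h
  -- each bundle already spends `ω* ≥ ω_a` on `s`, so it puts nothing outside `s`
  have hzero : ∀ e ∈ F, ∀ r ∉ s, e.2 r = 0 := by
    intro e he r hr
    have hsplit := sum_sdiff (subset_univ s) (f := e.2)
    have hr' := single_le_sum (fun _ _ => Nat.zero_le _) (mem_sdiff.2 ⟨mem_univ r, hr⟩)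
      (f := e.2)
    have := I.sum_eq_dem_of_mem_bundles (hF e he)
    have := I.dem_le_demMax e.1
    have := h e he
    omega
  have hRof : s = I.Rof F := by
    refine hs.antisymm fun r hr => ?_
    obtain ⟨e, he⟩ := (mem_filter.1 hr).2
    obtain ⟨he, her⟩ := mem_filter.1 he
    by_contra hrs
    have := hzero e he r hrs
    omega
  exact ⟨hRof, hRof ▸ h⟩

end MCRA

/-- **Lemma (the algorithm terminates).** For an MCRA instance, a finite `𝓕 ⊆ 𝓔`,
`ψ ∈ {0,1}`, and deviations `α, δ, Δ` satisfying the conditions of the rounding theorem,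
with `Ã, G̃, R̃, χ` defined as in the iterative rounding algorithm, we have
`|Ã| + ∑ ℓ, |G̃_ℓ| + |R̃| + χ ≤ |𝓕|`; moreover, if the inequality is tight then the
structural properties (i)–(iii) hold. -/
theorem algorithm_terminates {d : ℕ} (I : MCRA d)
    (F : Finset (I.A × (I.R → ℕ))) (hFE : ∀ e ∈ F, e.2 ∈ I.bundles e.1)
    (ψ : ℕ) (hψ01 : ψ = 0 ∨ ψ = 1)
    (α : Fin d → ℕ) (δ Δ : ℕ)
    (hineq : (if ψ = 1 then (1 : ℝ) / 2 else 0) + ∑ ℓ, (1 : ℝ) / (α ℓ + 1)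
      + (I.demMax : ℝ) / (δ + 1) ≤ 1)
    (hΔ : (2 ≤ Δ ∧ ψ = 1) ∨
      ((if ψ = 1 then (1 : ℝ) / 2 else 0) + ∑ ℓ, (1 : ℝ) / (α ℓ + 1)
          + (I.demMax : ℝ) / (δ + 1) < 1 ∧
        1 / (1 - ((if ψ = 1 then (1 : ℝ) / 2 else 0) + ∑ ℓ, (1 : ℝ) / (α ℓ + 1)
          + (I.demMax : ℝ) / (δ + 1))) - 1 ≤ (Δ : ℝ)))
    (Atil : Finset I.A)
    (hAtil : Atil ⊆ (I.Aof F).filter fun a => 2 ≤ (I.Fagent F a).card)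
    (hAtil0 : ψ = 0 → Atil = ∅)
    (Gtil : (ℓ : Fin d) → Finset (Fin (I.k ℓ)))
    (hGtil : ∀ ℓ, Gtil ℓ = Finset.univ.filter fun i => α ℓ + 1 ≤ (I.Fgroup F ℓ i).card)
    (Rtil : Finset I.R)
    (hRtil : Rtil = Finset.univ.filter fun r => δ + 1 ≤ ∑ e ∈ I.Fres F r, e.2 r)
    (χ : ℕ)
    (hχ : χ = if Δ + 1 ≤ (I.Aof F \ Atil).card then 1 else 0) :
    Atil.card + ∑ ℓ, (Gtil ℓ).card + Rtil.card + χ ≤ F.card ∧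
    (Atil.card + ∑ ℓ, (Gtil ℓ).card + Rtil.card + χ = F.card →
      (ψ = 1 → Atil = I.Aof F) ∧
      (∀ ℓ, Gtil ℓ = I.Gof F ℓ ∧ ∀ a ∈ I.Aof F, ∃ i ∈ I.Gof F ℓ, a ∈ I.G ℓ i) ∧
      (Rtil = I.Rof F ∧ ∀ e ∈ F, ∑ r ∈ I.Rof F, e.2 r = I.demMax)) := by
  obtain rfl : Gtil = fun ℓ => Finset.univ.filter fun i => α ℓ + 1 ≤ (I.Fgroup F ℓ i).card :=
    funext hGtil
  subst hRtil hχ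
  have hagents := I.two_mul_card_add_card_filter_notMem_le F fun a ha =>
    (Finset.mem_filter.1 (hAtil ha)).2
  have hAtil_empty (h : ψ ≠ 1) : Atil.card = 0 := by rw [hAtil0 (hψ01.resolve_right h)]; rfl
  obtain ⟨hle, htight⟩ := charging_bound Finset.univ α _ (by positivity) le_rfl hineq
    (add_ite_mul_le_ite_mul hAtil_empty hagents)
    (fun ℓ _ => I.card_mul_le_card_filter_exists_mem_G F fun i hi => (Finset.mem_filter.1 hi).2)
    (fun ℓ _ => Finset.card_filter_le _ _)
    (I.card_mul_le_sum_sum F fun r hr => (Finset.mem_filter.1 hr).2)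
    (I.sum_sum_le_card_mul_demMax F hFE _)
    fun h => one_lt_ite_mul_or_one_le_mul_one_sub hΔ ((I.card_Aof_sdiff_le F Atil).trans' h)
      (by omega)
  refine ⟨hle, fun heq => ?_⟩
  obtain ⟨hN, hM, hP⟩ := htight heq
  refine ⟨fun hψ => ?_, fun ℓ => ?_, ?_⟩
  · refine I.eq_Aof_of_card_filter_notMem_eq_zero F (hAtil.trans (Finset.filter_subset _ _)) ?_
    simpa [hψ] using hN
  · exact I.eq_Gof_of_card_filter_exists_mem_G_eq F (I.filter_lt_card_Fgroup_subset_Gof F ℓ _)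
      (hM ℓ (Finset.mem_univ ℓ))
  · exact I.eq_Rof_of_sum_sum_eq F hFE (I.filter_lt_sum_Fres_subset_Rof F _) hP
end
end

section
/- Let I=(A,R,E,G,ω,c,u) be an instance of assignment-MCRA, let x^f be a fractional resource allocation for I, let 𝓕 = {(a,q) ∈ ℳ : 0 < x^f(a,q) < 1}, and let R̃ = {r ∈ R : ∑_{a∈A} ∑_{q∈𝒯_{a,E}} q(r)·x^f(a,q) = c(r)}. Let y : ℳ → {0,1} be a rounding of x^f. Then for every r ∈ R(𝓕): if r ∈ R̃, then ∑_{a∈A} ∑_{q∈𝒯_{a,E}} q(r)·y(a,q) − c(r) ≤ ∑_{(a,q)∈𝓕(r)} q(r) − 1; and if r ∉ R̃, then ∑_{a∈A} ∑_{q∈𝒯_{a,E}} q(r)·y(a,q) − c(r) ≤ ∑_{(a,q)∈𝓕(r)} q(r). -/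
/-!
Write `L(z) = ∑_a ∑_{q ∈ 𝒯_{a,E}} q(r) z(a,q)` for the load of `r`. A rounding `y` agrees
with `x^f` wherever `x^f` is integral, so `L(y) - L(x^f)` is a sum over `𝓕(r)` only, and each
of its terms `q(r) (y(a,q) - x^f(a,q))` is strictly below `q(r)` because `y ≤ 1 < 1 + x^f`.
Since `L(x^f) ≤ c(r)`, this gives `L(y) - c(r) < ∑_{𝓕(r)} q(r)`; when `r` is tight both sides
are integers, which improves the bound by one.
-/

open scoped Classical BigOperators

noncomputable section

/-- An instance of the assignment-MCRA problem with `d` dimensions. -/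
structure AMCRA (d : ℕ) where
  A : Type
  R : Type
  [fintypeA : Fintype A]
  [fintypeR : Fintype R]
  [decEqA : DecidableEq A]
  [decEqR : DecidableEq R]
  /-- Number of groups in each dimension. -/
  k : Fin d → ℕ
  /-- The groups in each dimension. -/
  G : (ℓ : Fin d) → Fin (k ℓ) → Finset A
  G_disjoint : ∀ ℓ i j, i ≠ j → Disjoint (G ℓ i) (G ℓ j)
  /-- The demand of each agent. -/
  dem : A → ℕ
  dem_pos : ∀ a, 0 < dem a
  /-- The capacity of each resource. -/
  cap : R → ℕ
  cap_pos : ∀ r, 0 < cap r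
  /-- The acceptable agent-resource pairs `E ⊆ A × R`. -/
  acc : Finset (A × R)
  /-- The utility function `u_a : 𝒯_a → ℝ≥0` of each agent. -/
  u : A → (R → ℕ) → ℝ
  u_nonneg : ∀ a q, 0 ≤ u a q

attribute [instance] AMCRA.fintypeA AMCRA.fintypeR AMCRA.decEqA AMCRA.decEqR

namespace AMCRA

variable {d : ℕ} (I : AMCRA d)

/-- The set `𝒯_a` of `ω_a`-bundles of agent `a`. -/
def bundles (a : I.A) : Finset (I.R → ℕ) :=
  (Fintype.piFinset fun _ : I.R => Finset.range (I.dem a + 1)).filter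
    fun q => ∑ r, q r = I.dem a

/-- The set `𝒯_{a,E}` of `ω_a`-bundles of agent `a` made of acceptable resources. -/
def bundlesE (a : I.A) : Finset (I.R → ℕ) :=
  (I.bundles a).filter fun q => ∀ r, 1 ≤ q r → (a, r) ∈ I.acc

/-- `ω* = max_{a ∈ A} ω_a`. -/
def demMax : ℕ := Finset.univ.sup I.dem

/-- A fractional resource allocation for an assignment-MCRA instance (viewed as a map
on `ℳ`, i.e. on pairs `(a,q)` with `q ∈ 𝒯_{a,E}`); its extension by zero is a
fractional resource allocation for the MCRA instance with all agents binding. -/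
def IsFracAlloc (x : I.A → (I.R → ℕ) → ℝ) : Prop :=
  (∀ a, ∀ q ∈ I.bundlesE a, 0 ≤ x a q ∧ x a q ≤ 1) ∧
  (∀ a, ∑ q ∈ I.bundlesE a, x a q = 1) ∧
  (∀ r : I.R, ∑ a, ∑ q ∈ I.bundlesE a, (q r : ℝ) * x a q ≤ (I.cap r : ℝ))

/-- The total utility `U_{ℓ,i}` of group `G_{ℓ,i}` under a mapping `x`. -/
def groupU (x : I.A → (I.R → ℕ) → ℝ) (ℓ : Fin d) (i : Fin (I.k ℓ)) : ℝ :=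
  ∑ a ∈ I.G ℓ i, ∑ q ∈ I.bundlesE a, I.u a q * x a q

/-- The maximum utility `U*_{ℓ,i}` of an agent in group `G_{ℓ,i}`. -/
def groupUMax (ℓ : Fin d) (i : Fin (I.k ℓ)) : ℝ :=
  sSup {v : ℝ | ∃ a ∈ I.G ℓ i, ∃ q ∈ I.bundles a, I.u a q = v}

end AMCRA

namespace AMCRA

variable {d : ℕ} (I : AMCRA d)

/-- `𝓕`: the agent-bundle pairs of `ℳ` on which `x` is fractional. -/
def fracSupport (x : I.A → (I.R → ℕ) → ℝ) : Finset (I.A × (I.R → ℕ)) :=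
  Finset.univ.biUnion fun a =>
    ((I.bundlesE a).filter fun q => 0 < x a q ∧ x a q < 1).image fun q => (a, q)

/-- `𝓕(r)`: the pairs of `𝓕` incident to resource `r`. -/
def Fres (F : Finset (I.A × (I.R → ℕ))) (r : I.R) : Finset (I.A × (I.R → ℕ)) :=
  F.filter fun e => 1 ≤ e.2 r

end AMCRA

open Finset

namespace AMCRA

variable {d : ℕ} (I : AMCRA d)

def load (z : I.A → (I.R → ℕ) → ℝ) (r : I.R) : ℝ :=
  ∑ a, ∑ q ∈ I.bundlesE a, (q r : ℝ) * z a q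

def IsRounding (x y : I.A → (I.R → ℕ) → ℝ) : Prop :=
  ∀ a, ∀ q ∈ I.bundlesE a,
    (y a q = 0 ∨ y a q = 1) ∧ (x a q = 0 → y a q = 0) ∧ (x a q = 1 → y a q = 1)

variable {I}

theorem mem_Fres_fracSupport {x : I.A → (I.R → ℕ) → ℝ} {r : I.R} {e : I.A × (I.R → ℕ)} :
    e ∈ I.Fres (I.fracSupport x) r ↔
      e.2 ∈ I.bundlesE e.1 ∧ (0 < x e.1 e.2 ∧ x e.1 e.2 < 1) ∧ 1 ≤ e.2 r := by
  obtain ⟨a, q⟩ := e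
  simp only [Fres, fracSupport, mem_filter, mem_biUnion, mem_image, mem_univ, true_and,
    Prod.mk.injEq]
  constructor
  · rintro ⟨⟨a, q, ⟨hq, hfrac⟩, rfl, rfl⟩, hr⟩
    exact ⟨hq, hfrac, hr⟩
  · rintro ⟨hq, hfrac, hr⟩
    exact ⟨⟨a, q, ⟨hq, hfrac⟩, rfl, rfl⟩, hr⟩

theorem sum_Fres_fracSupport {β : Type*} [AddCommMonoid β] (x : I.A → (I.R → ℕ) → ℝ)
    (r : I.R) (f : I.A → (I.R → ℕ) → β) :
    ∑ e ∈ I.Fres (I.fracSupport x) r, f e.1 e.2 =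
      ∑ a, ∑ q ∈ I.bundlesE a with (0 < x a q ∧ x a q < 1) ∧ 1 ≤ q r, f a q :=
  sum_finset_product' _ _ _ fun e => by simp [mem_Fres_fracSupport]

namespace IsRounding

variable {x y : I.A → (I.R → ℕ) → ℝ} {a : I.A} {q : I.R → ℕ}

theorem le_one (hy : I.IsRounding x y) (hq : q ∈ I.bundlesE a) : y a q ≤ 1 := by
  rcases (hy a q hq).1 with h | h <;> simp [h]

theorem eq_of_not_frac (hy : I.IsRounding x y) (hq : q ∈ I.bundlesE a)
    (hx : 0 ≤ x a q ∧ x a q ≤ 1) (hfrac : ¬(0 < x a q ∧ x a q < 1)) : y a q = x a q := by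
  rcases hx.1.eq_or_lt with h0 | hpos
  · rw [(hy a q hq).2.1 h0.symm, h0]
  · have h1 : x a q = 1 := hx.2.eq_or_lt.resolve_right fun hlt => hfrac ⟨hpos, hlt⟩
    rw [(hy a q hq).2.2 h1, h1]

theorem load_eq_natCast (hy : I.IsRounding x y) (r : I.R) : ∃ n : ℕ, I.load y r = n :=
  ⟨∑ a, ∑ q ∈ I.bundlesE a with y a q = 1, q r, by
    push_cast
    refine sum_congr rfl fun a _ => ?_
    rw [sum_filter]
    refine sum_congr rfl fun q hq => ?_
    rcases (hy a q hq).1 with h | h <;> simp [h]⟩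

theorem load_sub_load (hy : I.IsRounding x y)
    (hx : ∀ a, ∀ q ∈ I.bundlesE a, 0 ≤ x a q ∧ x a q ≤ 1) (r : I.R) :
    I.load y r - I.load x r =
      ∑ e ∈ I.Fres (I.fracSupport x) r, (e.2 r : ℝ) * (y e.1 e.2 - x e.1 e.2) := by
  rw [sum_Fres_fracSupport x r fun a q => (q r : ℝ) * (y a q - x a q), load, load, ← sum_sub_distrib]
  refine sum_congr rfl fun a _ => ?_
  rw [← sum_sub_distrib, sum_filter]
  refine sum_congr rfl fun q hq => ?_
  split_ifs with h
  · ring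
  · rcases Nat.eq_zero_or_pos (q r) with h0 | hpos
    · simp [h0]
    · rw [hy.eq_of_not_frac hq (hx a q hq) fun hfrac => h ⟨hfrac, hpos⟩, sub_self]

theorem load_sub_load_lt (hy : I.IsRounding x y)
    (hx : ∀ a, ∀ q ∈ I.bundlesE a, 0 ≤ x a q ∧ x a q ≤ 1) {r : I.R}
    (hr : (I.Fres (I.fracSupport x) r).Nonempty) :
    I.load y r - I.load x r < ∑ e ∈ I.Fres (I.fracSupport x) r, (e.2 r : ℝ) := by
  rw [hy.load_sub_load hx]
  refine sum_lt_sum_of_nonempty hr fun e he => ?_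
  obtain ⟨hq, ⟨hpos, -⟩, hr⟩ := mem_Fres_fracSupport.mp he
  have hy1 := hy.le_one hq
  have hqr : (0 : ℝ) < e.2 r := by exact_mod_cast hr
  nlinarith

end IsRounding

end AMCRA

/-- **Claim (deviation from resource capacities upon rounding).** Let `x^f` be a
fractional resource allocation for an assignment-MCRA instance, `𝓕` its set of
fractional entries, `R̃` the set of resources whose capacity constraint is tight at
`x^f`, and `y` a rounding of `x^f`.  Then for every `r ∈ R(𝓕)`: if `r ∈ R̃` then
`∑_a ∑_q q r * y − c r ≤ (∑_{(a,q) ∈ 𝓕(r)} q r) − 1`, and otherwise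
`∑_a ∑_q q r * y − c r ≤ ∑_{(a,q) ∈ 𝓕(r)} q r`. -/
theorem rounding_resource_deviation {d : ℕ} (I : AMCRA d)
    (xf : I.A → (I.R → ℕ) → ℝ) (hxf : I.IsFracAlloc xf)
    (y : I.A → (I.R → ℕ) → ℝ)
    (hy : ∀ a, ∀ q ∈ I.bundlesE a,
      (y a q = 0 ∨ y a q = 1) ∧ (xf a q = 0 → y a q = 0) ∧ (xf a q = 1 → y a q = 1))
    (r : I.R) (hr : (I.Fres (I.fracSupport xf) r).Nonempty) :
    (∑ a, ∑ q ∈ I.bundlesE a, (q r : ℝ) * xf a q = (I.cap r : ℝ) →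
      ∑ a, ∑ q ∈ I.bundlesE a, (q r : ℝ) * y a q - (I.cap r : ℝ) ≤
        (∑ e ∈ I.Fres (I.fracSupport xf) r, (e.2 r : ℝ)) - 1) ∧
    (∑ a, ∑ q ∈ I.bundlesE a, (q r : ℝ) * xf a q ≠ (I.cap r : ℝ) →
      ∑ a, ∑ q ∈ I.bundlesE a, (q r : ℝ) * y a q - (I.cap r : ℝ) ≤
        ∑ e ∈ I.Fres (I.fracSupport xf) r, (e.2 r : ℝ)) := by
  obtain ⟨hx01, -, hcap⟩ := hxf
  have hlt := AMCRA.IsRounding.load_sub_load_lt hy hx01 hr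
  obtain ⟨n, hn⟩ := AMCRA.IsRounding.load_eq_natCast hy r
  unfold AMCRA.load at hlt hn
  refine ⟨fun htight => ?_, fun _ => by linarith [hcap r]⟩
  rw [hn, ← Nat.cast_sum] at hlt ⊢
  rw [htight] at hlt
  have hint : (n : ℤ) - I.cap r < ∑ e ∈ I.Fres (I.fracSupport xf) r, (e.2 r : ℤ) := by
    exact_mod_cast hlt
  exact_mod_cast Int.le_sub_one_of_lt hint
end
end

section
/- For every δ ∈ ℕ₀ and every Δ⁺ ∈ ℕ₀, there exists a fractionally feasible instance I of assignment-MCRA with a single dimension (d = 1) and unit demands (ω_a = 1 for every a ∈ A) that does not admit any (0,δ,Δ⁺)-approximately proportional allocation. -/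
open scoped Classical BigOperators

noncomputable section

namespace AMCRA

/-- For a single-dimensional assignment-MCRA instance with `k` groups,
`y` is an `(α,δ,Δ⁺)`-approximately proportional allocation. -/
def IsApproxProp (I : AMCRA 1) (α δ Δp : ℕ) (y : I.A → (I.R → ℕ) → ℝ) : Prop :=
  (∀ a, ∀ q ∈ I.bundlesE a, y a q = 0 ∨ y a q = 1) ∧
  (∀ a, ∑ q ∈ I.bundlesE a, y a q = 1) ∧
  (∀ r : I.R, ∑ a, ∑ q ∈ I.bundlesE a, (q r : ℝ) * y a q - (I.cap r : ℝ) ≤ (δ : ℝ)) ∧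
  (∑ r : I.R, max 0 (∑ a, ∑ q ∈ I.bundlesE a, (q r : ℝ) * y a q - (I.cap r : ℝ)) ≤ (Δp : ℝ)) ∧
  (∀ i : Fin (I.k 0), ∀ x, I.IsFracAlloc x →
    I.groupU x 0 i / (I.k 0 : ℝ) - (α : ℝ) * I.groupUMax 0 i ≤ I.groupU y 0 i)

end AMCRA

/-! Take `δ + 2` agents, each its own group, and a resource of capacity `1` carrying all the
utility (plus a worthless one of ample capacity). Splitting the good resource evenly is
fractionally feasible. But each agent `i` could receive the whole good resource in a fractional
allocation, so exact proportionality forces `U_i(y) > 0`: integrally, every agent must get the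
good resource, which is then overloaded by `δ + 1`. -/

open Finset

theorem Pi.single_one_injective {R : Type*} [DecidableEq R] :
    Function.Injective fun r : R => (Pi.single r 1 : R → ℕ) := by
  intro r s h
  simpa [Pi.single_apply, eq_comm] using congrFun h s

theorem Pi.exists_single_eq_of_sum_eq_one {R : Type*} [Fintype R] [DecidableEq R] {q : R → ℕ}
    (hq : ∑ r, q r = 1) : ∃ r, Pi.single r 1 = q := by
  obtain ⟨r, -, hr⟩ := exists_ne_zero_of_sum_ne_zero (hq.trans_ne one_ne_zero)
  have hsplit := add_sum_erase univ q (mem_univ r)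
  have hrest : ∑ s ∈ univ.erase r, q s = 0 := by omega
  refine ⟨r, funext fun s => ?_⟩
  rcases eq_or_ne s r with rfl | hs
  · simp only [Pi.single_eq_same]; omega
  · rw [Pi.single_eq_of_ne hs]
    exact ((sum_eq_zero_iff.1 hrest) s (mem_erase.2 ⟨hs, mem_univ s⟩)).symm

namespace AMCRA

variable {d : ℕ} (I : AMCRA d) {a : I.A}

theorem bundles_eq_image_single (h : I.dem a = 1) :
    I.bundles a = univ.image fun r => Pi.single r 1 := by
  ext q
  simp only [bundles, h, mem_filter, Fintype.mem_piFinset, mem_range, mem_image, mem_univ,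
    true_and]
  constructor
  · exact fun ⟨_, hq⟩ => Pi.exists_single_eq_of_sum_eq_one hq
  · rintro ⟨r, rfl⟩
    refine ⟨fun s => ?_, by simp⟩
    rw [Pi.single_apply]
    split_ifs <;> omega

theorem sum_bundles_of_dem_eq_one (h : I.dem a = 1) (g : (I.R → ℕ) → ℝ) :
    ∑ q ∈ I.bundles a, g q = ∑ r, g (Pi.single r 1) := by
  rw [I.bundles_eq_image_single h, sum_image fun r _ s _ hrs => Pi.single_one_injective hrs]

theorem sum_bundles_mul_apply_of_dem_eq_one (h : I.dem a = 1) (x : (I.R → ℕ) → ℝ) (r : I.R) :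
    ∑ q ∈ I.bundles a, (q r : ℝ) * x q = x (Pi.single r 1) := by
  simp [I.sum_bundles_of_dem_eq_one h, Pi.single_apply]

end AMCRA

abbrev oneGoodResource (n : ℕ) [NeZero n] : AMCRA 1 where
  A := Fin n
  R := Bool
  k := fun _ => n
  G := fun _ i => {i}
  G_disjoint := fun _ _ _ hij => disjoint_singleton.2 hij
  dem := fun _ => 1
  dem_pos := fun _ => one_pos
  cap := fun r => if r then 1 else n
  cap_pos := fun r => by cases r <;> simp [Nat.pos_of_neZero]
  acc := univ
  u := fun _ q => q true
  u_nonneg := fun _ q => Nat.cast_nonneg _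

namespace oneGoodResource

variable {n : ℕ} [NeZero n]

theorem sum_bundlesE (a : Fin n) (g : (Bool → ℕ) → ℝ) :
    ∑ q ∈ (oneGoodResource n).bundlesE a, g q = g (Pi.single true 1) + g (Pi.single false 1) := by
  simp [AMCRA.bundlesE, (oneGoodResource n).sum_bundles_of_dem_eq_one (a := a) rfl]

theorem sum_bundlesE_mul_apply (a : Fin n) (x : (Bool → ℕ) → ℝ) (r : Bool) :
    ∑ q ∈ (oneGoodResource n).bundlesE a, (q r : ℝ) * x q = x (Pi.single r 1) := by
  simp [AMCRA.bundlesE, (oneGoodResource n).sum_bundles_mul_apply_of_dem_eq_one (a := a) rfl]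

theorem groupU_eq (x : Fin n → (Bool → ℕ) → ℝ) (i : Fin n) :
    (oneGoodResource n).groupU x 0 i = x i (Pi.single true 1) := by
  simp only [AMCRA.groupU, sum_singleton]
  exact sum_bundlesE_mul_apply i (x i) true

def shareAlloc (s : Fin n → ℝ) : Fin n → (Bool → ℕ) → ℝ :=
  fun a q => if q = Pi.single true 1 then s a else 1 - s a

theorem isFracAlloc_shareAlloc {s : Fin n → ℝ} (hs₀ : ∀ a, 0 ≤ s a) (hs₁ : ∀ a, s a ≤ 1)
    (hsum : ∑ a, s a ≤ 1) : (oneGoodResource n).IsFracAlloc (shareAlloc s) := by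
  have hbad : ∀ a, shareAlloc s a (Pi.single false 1) = 1 - s a := fun a =>
    if_neg (Pi.single_one_injective.ne Bool.false_ne_true)
  refine ⟨fun a q _ => ?_, fun a => ?_, fun r => ?_⟩
  · unfold shareAlloc
    split_ifs <;> constructor <;> linarith [hs₀ a, hs₁ a]
  · rw [sum_bundlesE, hbad, shareAlloc, if_pos rfl]
    ring
  · rw [sum_congr rfl fun a _ => sum_bundlesE_mul_apply a _ r]
    cases r
    · calc ∑ a, shareAlloc s a (Pi.single false 1) = ∑ a : Fin n, (1 - s a) :=
            sum_congr rfl fun a _ => hbad a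
        _ ≤ ∑ _a : Fin n, (1 : ℝ) := sum_le_sum fun a _ => by linarith [hs₀ a]
        _ = _ := by simp
    · simpa [shareAlloc] using hsum

theorem good_eq_one_of_isApproxProp {y : Fin n → (Bool → ℕ) → ℝ} {δ Δp : ℕ}
    (hy : (oneGoodResource n).IsApproxProp 0 δ Δp y) (i : Fin n) :
    y i (Pi.single true 1) = 1 := by
  obtain ⟨hy01, -, -, -, hprop⟩ := hy
  -- Giving `i` the whole good resource is fractional and yields `U_i = 1`, so `U_i(y) ≥ 1 / n > 0`.
  have hdict := hprop i (shareAlloc (Pi.single i 1))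
    (isFracAlloc_shareAlloc (fun a => by rw [Pi.single_apply]; split_ifs <;> norm_num)
      (fun a => by rw [Pi.single_apply]; split_ifs <;> norm_num) (by simp))
  rw [groupU_eq, groupU_eq, shareAlloc, if_pos rfl, Pi.single_eq_same] at hdict
  have hpos : 0 < y i (Pi.single true 1) :=
    lt_of_lt_of_le (by simp [NeZero.pos]) hdict
  have hmem : Pi.single true 1 ∈ (oneGoodResource n).bundlesE i := by
    simp [AMCRA.bundlesE, (oneGoodResource n).bundles_eq_image_single (a := i) rfl]
  exact (hy01 i _ hmem).resolve_left hpos.ne'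

theorem le_add_one_of_isApproxProp {y : Fin n → (Bool → ℕ) → ℝ} {δ Δp : ℕ}
    (hy : (oneGoodResource n).IsApproxProp 0 δ Δp y) : n ≤ δ + 1 := by
  have hgood := hy.2.2.1 true
  rw [sum_congr rfl fun a _ => (sum_bundlesE_mul_apply a _ true).trans
    (good_eq_one_of_isApproxProp hy a)] at hgood
  simp only [sum_const, card_univ, Fintype.card_fin, nsmul_eq_mul, mul_one, ↓reduceIte,
    Nat.cast_one, tsub_le_iff_right] at hgood
  exact_mod_cast hgood

end oneGoodResource

/-- **Proposition (no exact proportionality with bounded capacity violations).**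
For every `δ` and `Δ⁺`, there is a fractionally feasible single-dimensional
assignment-MCRA instance with unit demands admitting no `(0,δ,Δ⁺)`-approximately
proportional allocation. -/
theorem no_exact_proportional (δ Δp : ℕ) :
    ∃ I : AMCRA 1, (∀ a : I.A, I.dem a = 1) ∧ (∃ x, I.IsFracAlloc x) ∧
      ¬ ∃ y : I.A → (I.R → ℕ) → ℝ, AMCRA.IsApproxProp I 0 δ Δp y := by
  have hn : (0 : ℝ) < δ + 2 := by positivity
  refine ⟨oneGoodResource (δ + 2), fun _ => rfl,
    ⟨_, oneGoodResource.isFracAlloc_shareAlloc (s := fun _ => 1 / (δ + 2 : ℝ))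
      (fun _ => by positivity) (fun _ => by rw [div_le_one hn]; linarith) (by simp [hn.ne'])⟩, ?_⟩
  rintro ⟨y, hy⟩
  have := oneGoodResource.le_add_one_of_isApproxProp hy
  omega
end
end

section
/- For every α ∈ ℕ₀ and every Δ⁺ ∈ ℕ₀, there exists a fractionally feasible instance I of assignment-MCRA with a single dimension (d = 1) and unit demands (ω_a = 1 for every a ∈ A) that does not admit any (α,0,Δ⁺)-approximately proportional allocation. -/
open scoped Classical BigOperators

noncomputable section

/-!
Two chains of `m + 1` agents compete for one shared resource of capacity one. Each agent
values only the private resource of its predecessor (the head values the shared resource), and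
may otherwise take its own private resource, which is worthless to it. Without capacity
violations an agent can get its valued resource only if its predecessor gets its own, so only
the chain whose head holds the shared resource gets positive utility: the other chain gets
utility `0`. Routing everything to one chain is feasible, so proportionality asks for
`(m + 1) / 2 - α` for each chain, which is positive for `m = 2α`.
-/

open scoped Finset

lemma Finset.exists_mem_eq_ite_of_sum_eq_one {ι R : Type*} [DecidableEq ι]
    [AddCommMonoidWithOne R] [CharZero R] {s : Finset ι} {f : ι → R}
    (h01 : ∀ i ∈ s, f i = 0 ∨ f i = 1) (hsum : ∑ i ∈ s, f i = 1) :
    ∃ i₀ ∈ s, ∀ i ∈ s, f i = if i = i₀ then 1 else 0 := by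
  have hf : ∀ i ∈ s, f i = if f i = 1 then 1 else 0 := fun i hi => by
    rcases h01 i hi with h | h <;> simp [h]
  rw [Finset.sum_congr rfl hf, Finset.sum_boole, Nat.cast_eq_one, Finset.card_eq_one] at hsum
  obtain ⟨i₀, hi₀⟩ := hsum
  have hmem : ∀ i, i ∈ s ∧ f i = 1 ↔ i = i₀ := fun i => by
    simpa using Finset.ext_iff.1 hi₀ i
  refine ⟨i₀, ((hmem i₀).2 rfl).1, fun i hi => ?_⟩
  by_cases h : i = i₀
  · simp [h, ((hmem i₀).2 rfl).2]
  · rcases h01 i hi with h' | h'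
    · simp [h, h']
    · exact absurd ((hmem i).1 ⟨hi, h'⟩) h


lemma Function.injective_iff_forall_card_filter_le_one {α β : Type*} [Fintype α] [DecidableEq β]
    {f : α → β} : Function.Injective f ↔ ∀ b, #{a | f a = b} ≤ 1 := by
  simp only [Finset.card_le_one, Finset.mem_filter, Finset.mem_univ, true_and]
  exact ⟨fun h _ _ ha _ hb => h (ha.trans hb.symm), fun h a _ hab => h _ a rfl _ hab.symm⟩

namespace AMCRA

variable {d : ℕ} (I : AMCRA d)

lemma le_dem_of_mem_bundles {a : I.A} {q : I.R → ℕ} (hq : q ∈ I.bundles a) (r : I.R) :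
    q r ≤ I.dem a := by
  simp only [bundles, Finset.mem_filter, Fintype.mem_piFinset, Finset.mem_range] at hq
  exact Nat.lt_succ_iff.mp (hq.1 r)

lemma mem_bundles_iff_eq_single {a : I.A} (ha : I.dem a = 1) {q : I.R → ℕ} :
    q ∈ I.bundles a ↔ ∃ r, q = Pi.single r 1 := by
  simp only [bundles, Finset.mem_filter, Fintype.mem_piFinset, Finset.mem_range, ha]
  constructor
  · rintro ⟨-, hsum⟩
    obtain ⟨r, hr⟩ := (Finsupp.sum_eq_one_iff (Finsupp.equivFunOnFinite.symm q)).1 <| by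
      rwa [Finsupp.sum_fintype _ _ fun _ => rfl]
    exact ⟨r, by simpa [← Finsupp.single_eq_pi_single] using congrArg (⇑) hr⟩
  · rintro ⟨r, rfl⟩
    refine ⟨fun r' => ?_, by simp⟩
    rw [Pi.single_apply]
    split_ifs <;> omega

lemma single_mem_bundlesE {a : I.A} (ha : I.dem a = 1) {r : I.R} (hr : (a, r) ∈ I.acc) :
    Pi.single r 1 ∈ I.bundlesE a := by
  refine Finset.mem_filter.2 ⟨(I.mem_bundles_iff_eq_single ha).2 ⟨r, rfl⟩, fun r' hr' => ?_⟩
  rw [Pi.single_apply] at hr'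
  split_ifs at hr' with h
  · exact h ▸ hr
  · omega

lemma exists_eq_single_of_mem_bundlesE {a : I.A} (ha : I.dem a = 1) {q : I.R → ℕ}
    (hq : q ∈ I.bundlesE a) : ∃ r, (a, r) ∈ I.acc ∧ q = Pi.single r 1 := by
  obtain ⟨hq, hacc⟩ := Finset.mem_filter.1 hq
  obtain ⟨r, rfl⟩ := (I.mem_bundles_iff_eq_single ha).1 hq
  exact ⟨r, hacc r (by simp), rfl⟩

def ofAssignment (σ : I.A → I.R) : I.A → (I.R → ℕ) → ℝ :=
  fun a q => if q = Pi.single (σ a) 1 then 1 else 0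

variable {I} {σ : I.A → I.R}

lemma sum_bundlesE_mul_ofAssignment (hdem : ∀ a, I.dem a = 1) (hσ : ∀ a, (a, σ a) ∈ I.acc)
    (a : I.A) (F : (I.R → ℕ) → ℝ) :
    ∑ q ∈ I.bundlesE a, F q * I.ofAssignment σ a q = F (Pi.single (σ a) 1) := by
  rw [Finset.sum_eq_single_of_mem _ (single_mem_bundlesE I (hdem a) (hσ a))
    fun q _ hq => by simp [ofAssignment, hq]]
  simp [ofAssignment]

lemma load_ofAssignment (hdem : ∀ a, I.dem a = 1) (hσ : ∀ a, (a, σ a) ∈ I.acc)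
    (r : I.R) :
    ∑ a, ∑ q ∈ I.bundlesE a, (q r : ℝ) * I.ofAssignment σ a q = #{a | σ a = r} := by
  simp_rw [sum_bundlesE_mul_ofAssignment hdem hσ, Pi.single_apply, Nat.cast_ite,
    Nat.cast_one, Nat.cast_zero, Finset.sum_boole, eq_comm]

lemma groupU_ofAssignment (hdem : ∀ a, I.dem a = 1) (hσ : ∀ a, (a, σ a) ∈ I.acc)
    (ℓ : Fin d) (i : Fin (I.k ℓ)) :
    I.groupU (I.ofAssignment σ) ℓ i = ∑ a ∈ I.G ℓ i, I.u a (Pi.single (σ a) 1) :=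
  Finset.sum_congr rfl fun a _ => sum_bundlesE_mul_ofAssignment hdem hσ a _

lemma isFracAlloc_ofAssignment (hdem : ∀ a, I.dem a = 1) (hσ : ∀ a, (a, σ a) ∈ I.acc)
    (hcap : ∀ r, #{a | σ a = r} ≤ I.cap r) :
    I.IsFracAlloc (I.ofAssignment σ) := by
  refine ⟨fun a q _ => ?_, fun a => ?_, fun r => ?_⟩
  · unfold ofAssignment; split_ifs <;> norm_num
  · simpa using sum_bundlesE_mul_ofAssignment hdem hσ a fun _ => 1
  · rw [load_ofAssignment hdem hσ]
    exact_mod_cast hcap r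

lemma exists_ofAssignment_eq (hdem : ∀ a, I.dem a = 1) {y : I.A → (I.R → ℕ) → ℝ}
    (h01 : ∀ a, ∀ q ∈ I.bundlesE a, y a q = 0 ∨ y a q = 1)
    (hsum : ∀ a, ∑ q ∈ I.bundlesE a, y a q = 1) :
    ∃ σ : I.A → I.R, (∀ a, (a, σ a) ∈ I.acc) ∧
      ∀ a, ∀ q ∈ I.bundlesE a, y a q = I.ofAssignment σ a q := by
  have h : ∀ a, ∃ r, (a, r) ∈ I.acc ∧
      ∀ q ∈ I.bundlesE a, y a q = if q = Pi.single r 1 then 1 else 0 := fun a => by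
    obtain ⟨q₀, hq₀, hy⟩ := Finset.exists_mem_eq_ite_of_sum_eq_one (h01 a) (hsum a)
    obtain ⟨r, hr, rfl⟩ := exists_eq_single_of_mem_bundlesE I (hdem a) hq₀
    exact ⟨r, hr, hy⟩
  choose σ hσ hy using h
  exact ⟨σ, hσ, hy⟩

lemma IsApproxProp.exists_assignment {I : AMCRA 1} (hdem : ∀ a, I.dem a = 1) {α Δp : ℕ}
    {y : I.A → (I.R → ℕ) → ℝ} (hy : I.IsApproxProp α 0 Δp y) :
    ∃ σ : I.A → I.R, (∀ a, (a, σ a) ∈ I.acc) ∧ (∀ r, #{a | σ a = r} ≤ I.cap r) ∧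
      ∀ i x, I.IsFracAlloc x → I.groupU x 0 i / I.k 0 - α * I.groupUMax 0 i ≤
        ∑ a ∈ I.G 0 i, I.u a (Pi.single (σ a) 1) := by
  obtain ⟨h01, hsum, hcap, -, hprop⟩ := hy
  obtain ⟨σ, hσ, hyσ⟩ := exists_ofAssignment_eq hdem h01 hsum
  have hagree (s : Finset I.A) (F : I.A → (I.R → ℕ) → ℝ) :
      ∑ a ∈ s, ∑ q ∈ I.bundlesE a, F a q * y a q =
        ∑ a ∈ s, ∑ q ∈ I.bundlesE a, F a q * I.ofAssignment σ a q :=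
    Finset.sum_congr rfl fun a _ => Finset.sum_congr rfl fun q hq => by rw [hyσ a q hq]
  refine ⟨σ, hσ, fun r => ?_, fun i x hx => ?_⟩
  · have h := hcap r
    rw [hagree Finset.univ fun _ q => q r, load_ofAssignment hdem hσ, Nat.cast_zero,
      sub_nonpos] at h
    exact_mod_cast h
  · calc _ ≤ I.groupU y 0 i := hprop i x hx
      _ = I.groupU (I.ofAssignment σ) 0 i := hagree _ _
      _ = _ := groupU_ofAssignment hdem hσ 0 i

end AMCRA

namespace TwoChains

abbrev Agent (m : ℕ) := Fin 2 × Fin (m + 1)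

-- `none` is the resource shared by the two chains, `some a` the private resource of agent `a`.
abbrev Res (m : ℕ) := Option (Agent m)

variable {m : ℕ}

/-- The resource agent `(g, j)` values: the private resource of its predecessor `(g, j - 1)`,
and the shared resource for the head `(g, 0)` of the chain. -/
def good (a : Agent m) : Res m := Fin.cases none (fun j => some (a.1, j.castSucc)) a.2

@[simp] lemma good_zero (g : Fin 2) : good ((g, 0) : Agent m) = none := rfl

@[simp] lemma good_succ (g : Fin 2) (j : Fin m) :
    good ((g, j.succ) : Agent m) = some (g, j.castSucc) := rfl

lemma fst_eq_of_good_eq_some {a b : Agent m} (h : good a = some b) : b.1 = a.1 := by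
  obtain ⟨g, j⟩ := a
  cases j using Fin.cases <;> simp_all [eq_comm]

lemma eq_of_good_eq_of_fst_eq {a b : Agent m} (hab : a.1 = b.1) (h : good a = good b) :
    a = b := by
  obtain ⟨g, j⟩ := a
  obtain ⟨g', j'⟩ := b
  cases j using Fin.cases <;> cases j' using Fin.cases <;> simp_all

def favor (g : Fin 2) (a : Agent m) : Res m := if a.1 = g then good a else some a

lemma favor_injective (g : Fin 2) : Function.Injective (favor (m := m) g) := by
  intro a b h
  unfold favor at h
  split_ifs at h with ha hb hb
  · exact eq_of_good_eq_of_fst_eq (ha.trans hb.symm) h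
  · exact absurd (ha ▸ fst_eq_of_good_eq_some h) hb
  · exact absurd (hb ▸ fst_eq_of_good_eq_some h.symm) ha
  · exact Option.some_injective _ h

section Assignment

variable {σ : Agent m → Res m}

lemma eq_none_of_eq_good (hσ : Function.Injective σ)
    (hacc : ∀ a, σ a = good a ∨ σ a = some a) (g : Fin 2) (j : Fin (m + 1))
    (h : σ (g, j) = good (g, j)) : σ (g, 0) = none := by
  induction j using Fin.induction with
  | zero => exact h
  | succ j ih =>
    -- `(g, j + 1)` holds the private resource of `(g, j)`, which must then take its good one.
    refine ih ((hacc _).resolve_right fun h' => ?_)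
    have := hσ (h.trans h'.symm)
    simp [Fin.ext_iff] at this

lemma exists_chain_forall_ne_good (hσ : Function.Injective σ)
    (hacc : ∀ a, σ a = good a ∨ σ a = some a) :
    ∃ g : Fin 2, ∀ j, σ (g, j) ≠ good (g, j) := by
  by_contra! h
  obtain ⟨j₀, h₀⟩ := h 0
  obtain ⟨j₁, h₁⟩ := h 1
  have := hσ <|
    (eq_none_of_eq_good hσ hacc 0 j₀ h₀).trans (eq_none_of_eq_good hσ hacc 1 j₁ h₁).symm
  simp at this

end Assignment

abbrev amcra (m : ℕ) : AMCRA 1 where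
  A := Agent m
  R := Res m
  k := fun _ => 2
  G := fun _ g => {a | a.1 = g}
  G_disjoint := fun _ _ _ hij => Finset.disjoint_filter.2 fun _ _ h h' => hij (h ▸ h')
  dem := fun _ => 1
  dem_pos := fun _ => one_pos
  cap := fun _ => 1
  cap_pos := fun _ => one_pos
  acc := {p | p.2 = good p.1 ∨ p.2 = some p.1}
  u := fun a q => q (good a)
  u_nonneg := fun _ _ => Nat.cast_nonneg _

lemma mem_acc {a : Agent m} {r : Res m} :
    (a, r) ∈ (amcra m).acc ↔ r = good a ∨ r = some a := by
  simp

lemma G_eq_map (g : Fin 2) : (amcra m).G 0 g = Finset.univ.map (.sectR g _) := by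
  ext ⟨g', j⟩
  simp [eq_comm]

lemma favor_mem_acc (g : Fin 2) (a : Agent m) : (a, favor g a) ∈ (amcra m).acc := by
  rw [mem_acc, favor]
  split_ifs <;> simp

lemma isFracAlloc_favor (g : Fin 2) :
    (amcra m).IsFracAlloc ((amcra m).ofAssignment (favor g)) :=
  AMCRA.isFracAlloc_ofAssignment (fun _ => rfl) (favor_mem_acc g) fun _ =>
    (Function.injective_iff_forall_card_filter_le_one.1 (favor_injective g)) _

lemma groupU_favor (g : Fin 2) :
    (amcra m).groupU ((amcra m).ofAssignment (favor g)) 0 g = m + 1 := by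
  rw [AMCRA.groupU_ofAssignment (fun _ => rfl) (favor_mem_acc g), G_eq_map, Finset.sum_map]
  simp [favor]

lemma groupUMax_le_one (g : Fin 2) : (amcra m).groupUMax 0 g ≤ 1 := by
  refine Real.sSup_le ?_ zero_le_one
  rintro _ ⟨a, -, q, hq, rfl⟩
  show ((q (good a) : ℕ) : ℝ) ≤ 1
  exact_mod_cast (amcra m).le_dem_of_mem_bundles hq (good a)

end TwoChains

/-- **Proposition (no approximate proportionality without capacity violations).**
For every `α` and `Δ⁺`, there is a fractionally feasible single-dimensional
assignment-MCRA instance with unit demands admitting no `(α,0,Δ⁺)`-approximately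
proportional allocation. -/
theorem no_proportional_without_capacity_violation (α Δp : ℕ) :
    ∃ I : AMCRA 1, (∀ a : I.A, I.dem a = 1) ∧ (∃ x, I.IsFracAlloc x) ∧
      ¬ ∃ y : I.A → (I.R → ℕ) → ℝ, AMCRA.IsApproxProp I α 0 Δp y := by
  open TwoChains in
  refine ⟨amcra (2 * α), fun _ => rfl, ⟨_, isFracAlloc_favor 0⟩, ?_⟩
  rintro ⟨y, hy⟩
  obtain ⟨σ, hacc, hcap, hprop⟩ := hy.exists_assignment fun _ => rfl
  obtain ⟨g, hg⟩ := exists_chain_forall_ne_good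
    (Function.injective_iff_forall_card_filter_le_one.2 hcap) fun a => mem_acc.1 (hacc a)
  have hUy : ∑ a ∈ (amcra (2 * α)).G 0 g, (amcra (2 * α)).u a (Pi.single (σ a) 1) = 0 := by
    rw [G_eq_map, Finset.sum_map]
    exact Finset.sum_eq_zero fun j _ => by simp [hg]
  have h := hprop g _ (isFracAlloc_favor g)
  rw [groupU_favor, hUy] at h
  have hk : ((amcra (2 * α)).k 0 : ℝ) = 2 := by norm_num
  have hUmax : (α : ℝ) * (amcra (2 * α)).groupUMax 0 g ≤ α :=
    mul_le_of_le_one_right α.cast_nonneg (groupUMax_le_one g)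
  rw [hk] at h
  push_cast at h
  linarith
end
end
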